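/- arXiv:2312.15725 — 5 statements merged into one kernel-verified Lean document; each statement's English description precedes it below -/
import Mathlib

section
/- Let Σ be a symmetric positive definite real (n₁+n₂)×(n₁+n₂) matrix with blocks Σ_v (n₁×n₁), Σ_u (n₂×n₂), Σ_vu (n₁×n₂) and Σ_uv = Σ_vuᵀ, and let A ∈ ℝ^{n₁×m}, B ∈ ℝ^{n₂×m}. Let C be the stacked matrix [A; B] and F = (Σ_u − Σ_uv Σ_v⁻¹ Σ_vu)⁻¹ the inverse Schur complement of Σ_v in Σ. Then Cᵀ Σ⁻¹ C = Aᵀ Σ_v⁻¹ A + (Aᵀ Σ_v⁻¹ Σ_vu − Bᵀ) F (Aᵀ Σ_v⁻¹ Σ_vu − Bᵀ)ᵀ. -/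
/-! Invert `Σ` blockwise through the Schur complement of `Σ_v` (invertible because `Σ` and hence
`Σ_v` are positive definite); expanding `Cᵀ Σ⁻¹ C` against that block inverse regroups into
`Aᵀ Σ_v⁻¹ A` plus a quadratic form in `F`, and the symmetry of `Σ_v⁻¹` identifies its right factor
with the transpose of its left one. -/

open Matrix

namespace Matrix

variable {k l m n R : Type*}

theorem PosDef.toBlocks₁₁ [CommRing R] [PartialOrder R] [StarRing R]
    {M : Matrix (m ⊕ n) (m ⊕ n) R} (hM : M.PosDef) : M.toBlocks₁₁.PosDef :=
  hM.submatrix Sum.inl_injective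

variable [Fintype m] [Fintype n] [DecidableEq m] [DecidableEq n] [CommRing R]

theorem inv_fromBlocks_eq_of_isUnit₁₁ (A : Matrix m m R) (B : Matrix m n R) (C : Matrix n m R)
    (D : Matrix n n R) (hA : IsUnit A) (hD : IsUnit (D - C * A⁻¹ * B)) :
    (fromBlocks A B C D)⁻¹ =
      fromBlocks (A⁻¹ + A⁻¹ * B * (D - C * A⁻¹ * B)⁻¹ * C * A⁻¹)
        (-(A⁻¹ * B * (D - C * A⁻¹ * B)⁻¹)) (-((D - C * A⁻¹ * B)⁻¹ * C * A⁻¹))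
        (D - C * A⁻¹ * B)⁻¹ := by
  let := hA.invertible
  rw [← invOf_eq_nonsing_inv A] at hD ⊢
  let := hD.invertible
  let := fromBlocks₁₁Invertible A B C D
  simp only [← invOf_eq_nonsing_inv, invOf_fromBlocks₁₁_eq]

theorem fromCols_mul_inv_fromBlocks_mul_fromRows (A : Matrix m m R) (B : Matrix m n R)
    (C : Matrix n m R) (D : Matrix n n R) (hA : IsUnit A) (hD : IsUnit (D - C * A⁻¹ * B))
    (X : Matrix l m R) (Y : Matrix l n R) (Z : Matrix m k R) (W : Matrix n k R) :
    fromCols X Y * (fromBlocks A B C D)⁻¹ * fromRows Z W =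
      X * A⁻¹ * Z + (X * A⁻¹ * B - Y) * (D - C * A⁻¹ * B)⁻¹ * (C * A⁻¹ * Z - W) := by
  rw [inv_fromBlocks_eq_of_isUnit₁₁ A B C D hA hD, fromCols_mul_fromBlocks, fromCols_mul_fromRows]
  simp only [Matrix.mul_add, Matrix.add_mul, Matrix.mul_sub, Matrix.sub_mul, Matrix.mul_neg,
    Matrix.neg_mul, Matrix.mul_assoc]
  abel

end Matrix

/-- Joint SNR matrix with correlated noises, first form: with `C = [A; B]`,
`Σ = [[Σ_v, Σ_vu],[Σ_vuᵀ, Σ_u]]` positive definite, and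
`F = (Σ_u − Σ_uv Σ_v⁻¹ Σ_vu)⁻¹` the inverse Schur complement of `Σ_v`,
`CᵀΣ⁻¹C = AᵀΣ_v⁻¹A + (AᵀΣ_v⁻¹Σ_vu − Bᵀ) F (AᵀΣ_v⁻¹Σ_vu − Bᵀ)ᵀ`. -/
theorem joint_snr_schur_form_x {n₁ n₂ m : ℕ}
    (Sv : Matrix (Fin n₁) (Fin n₁) ℝ) (Su : Matrix (Fin n₂) (Fin n₂) ℝ)
    (Svu : Matrix (Fin n₁) (Fin n₂) ℝ)
    (hS : (Matrix.fromBlocks Sv Svu Svuᵀ Su).PosDef)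
    (A : Matrix (Fin n₁) (Fin m) ℝ) (B : Matrix (Fin n₂) (Fin m) ℝ) :
    (Matrix.fromRows A B)ᵀ * (Matrix.fromBlocks Sv Svu Svuᵀ Su)⁻¹ * Matrix.fromRows A B
      = Aᵀ * Sv⁻¹ * A +
        (Aᵀ * Sv⁻¹ * Svu - Bᵀ) * (Su - Svuᵀ * Sv⁻¹ * Svu)⁻¹ * (Aᵀ * Sv⁻¹ * Svu - Bᵀ)ᵀ := by
  have hSv : Sv.PosDef := by simpa using hS.toBlocks₁₁
  have hSv_inv_symm : (Sv⁻¹)ᵀ = Sv⁻¹ := (isHermitian_iff_isSymm.mp hSv.inv.isHermitian).eq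
  have hSchur : IsUnit (Su - Svuᵀ * Sv⁻¹ * Svu) := by
    let := hSv.isUnit.invertible
    simpa only [invOf_eq_nonsing_inv] using isUnit_fromBlocks_iff_of_invertible₁₁.mp hS.isUnit
  rw [transpose_fromRows, fromCols_mul_inv_fromBlocks_mul_fromRows _ _ _ _ hSv.isUnit hSchur]
  simp only [transpose_sub, transpose_mul, transpose_transpose, hSv_inv_symm, Matrix.mul_assoc]
end

section
/- Let Σ be a symmetric positive definite real (n₁+n₂)×(n₁+n₂) matrix with blocks Σ_v, Σ_u, Σ_vu, Σ_uv = Σ_vuᵀ, let A ∈ ℝ^{n₁×m}, B ∈ ℝ^{n₂×m}, and let C = [A; B] be the stacked matrix. Then the synergic information matrices S^x = CᵀΣ⁻¹C − AᵀΣ_v⁻¹A and S^y = CᵀΣ⁻¹C − BᵀΣ_u⁻¹B are both positive semidefinite. In particular, the Fisher information of the joint measurements dominates (in the Loewner order) each individual Fisher information, so fusing the two modalities never increases the Cramér–Rao lower bound. -/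
open Matrix

/-!
For `Σ ≻ 0` and `Q` with injective `vecMul`, the block matrix `[[QΣQᴴ, Q], [Qᴴ, Σ⁻¹]]` has zero
Schur complement with respect to `Σ⁻¹`, so it is positive semidefinite; its Schur complement with
respect to `QΣQᴴ` then gives `Σ⁻¹ ⪰ Qᴴ(QΣQᴴ)⁻¹Q`. Conjugating by `C` shows that a linear
compression `Qz` of the measurement `z = Cs + w` carries no more Fisher information than `z`:
`CᴴΣ⁻¹C ⪰ (QC)ᴴ(QΣQᴴ)⁻¹(QC)`. The selectors `Q = [I 0]` and `Q = [0 I]` compress the joint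
measurement to `x` and to `y`, with `QC = A`, `QΣQᴴ = Σ_v` and `QC = B`, `QΣQᴴ = Σ_u`.
-/

namespace Matrix.PosDef

variable {ι κ K : Type*} [Fintype ι] [Fintype κ] [DecidableEq ι] [DecidableEq κ]
  [Field K] [PartialOrder K] [StarRing K] [StarOrderedRing K]
  {S : Matrix ι ι K} {Q : Matrix κ ι K}

theorem posSemidef_inv_sub_conjTranspose_mul_inv_mul (hS : S.PosDef)
    (hQ : Function.Injective Q.vecMul) :
    (S⁻¹ - Qᴴ * (Q * S * Qᴴ)⁻¹ * Q).PosSemidef := by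
  have hQSQ : (Q * S * Qᴴ).PosDef := hS.mul_mul_conjTranspose_same hQ
  have := hS.isUnit.invertible
  have := hS.inv.isUnit.invertible
  have := hQSQ.isUnit.invertible
  have hM : (fromBlocks (Q * S * Qᴴ) Q Qᴴ S⁻¹).PosSemidef := by
    rw [PosDef.fromBlocks₂₂ _ _ hS.inv, inv_inv_of_invertible, sub_self]
    exact .zero
  rwa [PosDef.fromBlocks₁₁ _ _ hQSQ] at hM

theorem posSemidef_conjTranspose_mul_inv_mul_sub (hS : S.PosDef)
    (hQ : Function.Injective Q.vecMul) {m : Type*} [Fintype m] (C : Matrix ι m K) :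
    (Cᴴ * S⁻¹ * C - (Q * C)ᴴ * (Q * S * Qᴴ)⁻¹ * (Q * C)).PosSemidef := by
  simpa only [Matrix.mul_sub, Matrix.sub_mul, conjTranspose_mul, Matrix.mul_assoc] using
    (hS.posSemidef_inv_sub_conjTranspose_mul_inv_mul hQ).conjTranspose_mul_mul_same C

end Matrix.PosDef

namespace Matrix

variable {R m n₁ n₂ : Type*} [Semiring R]

theorem fromCols_one_zero_mul_fromRows [Fintype n₁] [Fintype n₂] [DecidableEq n₁]
    (A : Matrix n₁ m R) (B : Matrix n₂ m R) :
    fromCols (1 : Matrix n₁ n₁ R) (0 : Matrix n₁ n₂ R) * fromRows A B = A := by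
  simp [fromCols_mul_fromRows]

theorem fromCols_zero_one_mul_fromRows [Fintype n₁] [Fintype n₂] [DecidableEq n₂]
    (A : Matrix n₁ m R) (B : Matrix n₂ m R) :
    fromCols (0 : Matrix n₂ n₁ R) (1 : Matrix n₂ n₂ R) * fromRows A B = B := by
  simp [fromCols_mul_fromRows]

theorem fromCols_one_zero_mul_fromBlocks_mul_conjTranspose [Fintype n₁] [Fintype n₂]
    [DecidableEq n₁] [StarRing R]
    (A : Matrix n₁ n₁ R) (B : Matrix n₁ n₂ R) (C : Matrix n₂ n₁ R) (D : Matrix n₂ n₂ R) :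
    fromCols (1 : Matrix n₁ n₁ R) (0 : Matrix n₁ n₂ R) * fromBlocks A B C D *
      (fromCols (1 : Matrix n₁ n₁ R) (0 : Matrix n₁ n₂ R))ᴴ = A := by
  simp [fromCols_mul_fromBlocks, conjTranspose_fromCols_eq_fromRows_conjTranspose,
    fromCols_mul_fromRows]

theorem fromCols_zero_one_mul_fromBlocks_mul_conjTranspose [Fintype n₁] [Fintype n₂]
    [DecidableEq n₂] [StarRing R]
    (A : Matrix n₁ n₁ R) (B : Matrix n₁ n₂ R) (C : Matrix n₂ n₁ R) (D : Matrix n₂ n₂ R) :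
    fromCols (0 : Matrix n₂ n₁ R) (1 : Matrix n₂ n₂ R) * fromBlocks A B C D *
      (fromCols (0 : Matrix n₂ n₁ R) (1 : Matrix n₂ n₂ R))ᴴ = D := by
  simp [fromCols_mul_fromBlocks, conjTranspose_fromCols_eq_fromRows_conjTranspose,
    fromCols_mul_fromRows]

theorem vecMul_fromCols_one_zero_injective [Fintype n₁] [DecidableEq n₁] :
    Function.Injective (fromCols (1 : Matrix n₁ n₁ R) (0 : Matrix n₁ n₂ R)).vecMul := by
  intro v w h
  funext i
  simpa [vecMul_fromCols] using congrFun h (Sum.inl i)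

theorem vecMul_fromCols_zero_one_injective [Fintype n₂] [DecidableEq n₂] :
    Function.Injective (fromCols (0 : Matrix n₂ n₁ R) (1 : Matrix n₂ n₂ R)).vecMul := by
  intro v w h
  funext i
  simpa [vecMul_fromCols] using congrFun h (Sum.inr i)

end Matrix

/-- The synergic information matrices `S^x = CᵀΣ⁻¹C − AᵀΣ_v⁻¹A` and
`S^y = CᵀΣ⁻¹C − BᵀΣ_u⁻¹B` are positive semidefinite: the Fisher information of the joint
measurements dominates each individual Fisher information in the Loewner order. -/
theorem synergic_information_posSemidef {n₁ n₂ m : ℕ}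
    (Sv : Matrix (Fin n₁) (Fin n₁) ℝ) (Su : Matrix (Fin n₂) (Fin n₂) ℝ)
    (Svu : Matrix (Fin n₁) (Fin n₂) ℝ)
    (hS : (Matrix.fromBlocks Sv Svu Svuᵀ Su).PosDef)
    (A : Matrix (Fin n₁) (Fin m) ℝ) (B : Matrix (Fin n₂) (Fin m) ℝ) :
    ((Matrix.fromRows A B)ᵀ * (Matrix.fromBlocks Sv Svu Svuᵀ Su)⁻¹ * Matrix.fromRows A B
        - Aᵀ * Sv⁻¹ * A).PosSemidef ∧
    ((Matrix.fromRows A B)ᵀ * (Matrix.fromBlocks Sv Svu Svuᵀ Su)⁻¹ * Matrix.fromRows A B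
        - Bᵀ * Su⁻¹ * B).PosSemidef := by
  have hx := hS.posSemidef_conjTranspose_mul_inv_mul_sub vecMul_fromCols_one_zero_injective
    (fromRows A B)
  have hy := hS.posSemidef_conjTranspose_mul_inv_mul_sub vecMul_fromCols_zero_one_injective
    (fromRows A B)
  rw [fromCols_one_zero_mul_fromRows, fromCols_one_zero_mul_fromBlocks_mul_conjTranspose] at hx
  rw [fromCols_zero_one_mul_fromRows, fromCols_zero_one_mul_fromBlocks_mul_conjTranspose] at hy
  simp only [conjTranspose_eq_transpose_of_trivial] at hx hy
  exact ⟨hx, hy⟩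
end

section
/- Let Ã ∈ ℝ^{n₁×m} and ρ ∈ ℝ^{n₁×n₂} with I − ρᵀρ positive definite, let B̃ = ρᵀÃ, and let Σ = [[I, ρ],[ρᵀ, I]] be the joint noise covariance (assumed positive definite). Then the joint SNR matrix of the stacked model C = [Ã; B̃] satisfies CᵀΣ⁻¹C = ÃᵀÃ; that is, the second modality is redundant: adding ỹ to x̃ yields exactly the same Fisher information as x̃ alone. -/
open Matrix

/-!
Writing `Σ = [[I, ρ], [ρᵀ, I]]`, the hypothesis `B̃ = ρᵀÃ` says exactly that `C = [Ã; B̃]` is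
`Σ [Ã; 0]`. Hence `Σ⁻¹ C = [Ã; 0]` and `Cᵀ Σ⁻¹ C = [Ãᵀ, B̃ᵀ] [Ã; 0] = ÃᵀÃ`.
-/

namespace Matrix

variable {l m n o α : Type*} [Fintype l] [Fintype m] [Semiring α]

theorem fromBlocks_one_mul_fromRows_zero [DecidableEq l]
    (P : Matrix l m α) (Q : Matrix m l α) (R : Matrix m m α) (A : Matrix l n α) :
    fromBlocks 1 P Q R * fromRows A (0 : Matrix m n α) = fromRows A (Q * A) := by
  simp [fromBlocks_mul_fromRows]

theorem transpose_fromRows_mul_fromRows_zero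
    (A : Matrix l n α) (B : Matrix m n α) (A' : Matrix l o α) :
    (fromRows A B)ᵀ * fromRows A' (0 : Matrix m o α) = Aᵀ * A' := by
  simp [transpose_fromRows, fromCols_mul_fromRows]

end Matrix

theorem second_modality_redundant_general {n₁ n₂ m : ℕ}
    (A : Matrix (Fin n₁) (Fin m) ℝ) (ρ : Matrix (Fin n₁) (Fin n₂) ℝ)
    (hS : (Matrix.fromBlocks (1 : Matrix (Fin n₁) (Fin n₁) ℝ) ρ ρᵀ
      (1 : Matrix (Fin n₂) (Fin n₂) ℝ)).PosDef)
    (B : Matrix (Fin n₂) (Fin m) ℝ) (hB : B = ρᵀ * A) :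
    (Matrix.fromRows A B)ᵀ *
        (Matrix.fromBlocks (1 : Matrix (Fin n₁) (Fin n₁) ℝ) ρ ρᵀ
          (1 : Matrix (Fin n₂) (Fin n₂) ℝ))⁻¹ * Matrix.fromRows A B
      = Aᵀ * A := by
  have hC : fromRows A B = fromBlocks (1 : Matrix (Fin n₁) (Fin n₁) ℝ) ρ ρᵀ 1 *
      fromRows A (0 : Matrix (Fin n₂) (Fin m) ℝ) := by
    rw [fromBlocks_one_mul_fromRows_zero, hB]
  have hSinvC : (fromBlocks 1 ρ ρᵀ 1)⁻¹ * fromRows A B = fromRows A 0 := by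
    rw [hC, nonsing_inv_mul_cancel_left _ _ hS.det_pos.ne'.isUnit]
  rw [Matrix.mul_assoc, hSinvC, transpose_fromRows_mul_fromRows_zero]

/-- Modality redundancy: if `B̃ = ρᵀÃ`, then the joint SNR matrix of the stacked model
`C = [Ã; B̃]` with noise covariance `Σ = [[I, ρ],[ρᵀ, I]]` equals `ÃᵀÃ`: the second
modality adds no Fisher information. -/
theorem second_modality_redundant {n₁ n₂ m : ℕ}
    (A : Matrix (Fin n₁) (Fin m) ℝ) (ρ : Matrix (Fin n₁) (Fin n₂) ℝ)
    (hρ : ((1 : Matrix (Fin n₂) (Fin n₂) ℝ) - ρᵀ * ρ).PosDef)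
    (hS : (Matrix.fromBlocks (1 : Matrix (Fin n₁) (Fin n₁) ℝ) ρ ρᵀ
      (1 : Matrix (Fin n₂) (Fin n₂) ℝ)).PosDef)
    (B : Matrix (Fin n₂) (Fin m) ℝ) (hB : B = ρᵀ * A) :
    (Matrix.fromRows A B)ᵀ *
        (Matrix.fromBlocks (1 : Matrix (Fin n₁) (Fin n₁) ℝ) ρ ρᵀ
          (1 : Matrix (Fin n₂) (Fin n₂) ℝ))⁻¹ * Matrix.fromRows A B
      = Aᵀ * A :=
  second_modality_redundant_general A ρ hS B hB
end

section
/- Let Ã ∈ ℝ^{n₁×m}, ρ ∈ ℝ^{n₁×n₂} with I − ρᵀρ positive definite, and λ ≥ 0 such that I − λ(I − ρᵀρ) is invertible. Define f : ℝ^{n₂×m} → ℝ by f(B̃) = Tr((Ãᵀρ − B̃ᵀ)(I − ρᵀρ)⁻¹(Ãᵀρ − B̃ᵀ)ᵀ) − λ Tr(B̃ᵀB̃). Then the Fréchet derivative of f vanishes at B̃* = (I − λ(I − ρᵀρ))⁻¹ ρᵀ Ã; that is, B̃* is a critical point of the Lagrangian for maximizing the trace of the joint Fisher information subject to the secondary SNR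 budget Tr(B̃ᵀB̃) ≤ p. -/
/-!
Write `C = ρᵀ Ã`, `M = I − ρᵀρ` and `K = I − λ M`. Since `(Ãᵀρ − B̃ᵀ)ᵀ = C − B̃`, the Lagrangian is
`tr((C − B̃)ᵀ M⁻¹ (C − B̃)) − λ tr(B̃ᵀB̃)`, whose derivative in the direction `H` is
`−2 tr((M⁻¹(C − B̃) + λB̃)ᵀ H)` because `M⁻¹` is symmetric. At `B̃* = K⁻¹C` we have
`C − B̃* = (K − I) B̃* = −λ M B̃*`, so `M⁻¹(C − B̃*) + λB̃* = 0`.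
-/

open Matrix

attribute [local instance] Matrix.normedAddCommGroup Matrix.normedSpace

namespace Matrix

variable {n m : Type*} [Fintype n]

theorem inv_mul_sub_add_smul_eq_zero [DecidableEq n] {M : Matrix n n ℝ} (hM : IsUnit M.det)
    {lam : ℝ} (hK : IsUnit (1 - lam • M)) (C : Matrix n m ℝ) :
    M⁻¹ * (C - (1 - lam • M)⁻¹ * C) + lam • ((1 - lam • M)⁻¹ * C) = 0 := by
  set B := (1 - lam • M)⁻¹ * C
  have hC : C = (1 - lam • M) * B := by
    rw [← Matrix.mul_assoc, mul_nonsing_inv _ ((isUnit_iff_isUnit_det _).mp hK), Matrix.one_mul]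
  have hCB : C - B = -(lam • (M * B)) := by
    rw [hC, Matrix.sub_mul, Matrix.one_mul, smul_mul]; abel
  rw [hCB, Matrix.mul_neg, Matrix.mul_smul, ← Matrix.mul_assoc, nonsing_inv_mul _ hM,
    Matrix.one_mul, neg_add_cancel]

variable [Fintype m]

noncomputable def traceForm (T : Matrix n n ℝ) :
    Matrix n m ℝ →L[ℝ] Matrix n m ℝ →L[ℝ] ℝ :=
  (LinearMap.mk₂ ℝ (fun X Y => (Xᵀ * T * Y).trace)
    (fun X X' Y => by rw [transpose_add, Matrix.add_mul, Matrix.add_mul, trace_add])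
    (fun c X Y => by rw [transpose_smul, smul_mul, smul_mul, trace_smul])
    (fun X Y Y' => by rw [Matrix.mul_add, trace_add])
    (fun c X Y => by rw [Matrix.mul_smul, trace_smul])).toContinuousBilinearMap

@[simp]
theorem traceForm_apply (T : Matrix n n ℝ) (X Y : Matrix n m ℝ) :
    traceForm T X Y = (Xᵀ * T * Y).trace :=
  rfl

theorem traceForm_comm {T : Matrix n n ℝ} (hT : T.IsSymm) (X Y : Matrix n m ℝ) :
    traceForm T X Y = traceForm T Y X := by
  rw [traceForm_apply, ← trace_transpose]
  simp only [transpose_mul, transpose_transpose, hT.eq, traceForm_apply, Matrix.mul_assoc]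

theorem hasFDerivAt_traceForm_self {T : Matrix n n ℝ} (hT : T.IsSymm) (X : Matrix n m ℝ) :
    HasFDerivAt (fun X => traceForm T X X) ((2 : ℝ) • traceForm T X) X := by
  refine ((traceForm T).hasFDerivAt_of_bilinear (hasFDerivAt_id X)
    (hasFDerivAt_id X)).congr_fderiv ?_
  ext H
  -- `traceForm` carries the product topology on matrices, not the normed one, so the
  -- `precompR`/`precompL` simp lemmas do not fire; unfold by defeq instead.
  change traceForm T X H + traceForm T H X = ((2 : ℝ) • traceForm T X) H
  rw [traceForm_comm hT H X, two_smul]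
  rfl

theorem traceForm_eq_traceForm_one [DecidableEq n] {T : Matrix n n ℝ} (hT : T.IsSymm)
    (X Y : Matrix n m ℝ) : traceForm T X Y = traceForm 1 (T * X) Y := by
  simp only [traceForm_apply, transpose_mul, hT.eq, Matrix.mul_one]

theorem hasFDerivAt_traceForm_lagrangian [DecidableEq n] {S : Matrix n n ℝ} (hS : S.IsSymm)
    (C B : Matrix n m ℝ) (lam : ℝ) :
    HasFDerivAt (fun B => traceForm S (C - B) (C - B) - lam * traceForm 1 B B)
      ((-2 : ℝ) • traceForm 1 (S * (C - B) + lam • B)) B := by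
  have hres := (hasFDerivAt_traceForm_self hS (C - B)).comp B
    ((hasFDerivAt_const C B).sub (hasFDerivAt_id B))
  refine (hres.sub ((hasFDerivAt_traceForm_self isSymm_one B).const_mul lam)).congr_fderiv ?_
  ext H
  change 2 * traceForm S (C - B) (0 - H) - lam * (2 * traceForm 1 B H) =
    -2 * traceForm 1 (S * (C - B) + lam • B) H
  rw [traceForm_eq_traceForm_one hS]
  simp only [traceForm_apply, zero_sub, Matrix.mul_one, Matrix.mul_neg, transpose_add,
    transpose_smul, Matrix.add_mul, smul_mul, trace_add, trace_neg, trace_smul, smul_eq_mul]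
  ring

end Matrix

theorem optimal_secondary_sensor_critical_point_general {n₁ n₂ m : ℕ}
    (A : Matrix (Fin n₁) (Fin m) ℝ) (ρ : Matrix (Fin n₁) (Fin n₂) ℝ)
    (hρ : ((1 : Matrix (Fin n₂) (Fin n₂) ℝ) - ρᵀ * ρ).PosDef)
    (lam : ℝ)
    (hinv : IsUnit ((1 : Matrix (Fin n₂) (Fin n₂) ℝ) -
      lam • ((1 : Matrix (Fin n₂) (Fin n₂) ℝ) - ρᵀ * ρ))) :
    fderiv ℝ
      (fun B : Matrix (Fin n₂) (Fin m) ℝ =>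
        ((Aᵀ * ρ - Bᵀ) * ((1 : Matrix (Fin n₂) (Fin n₂) ℝ) - ρᵀ * ρ)⁻¹ *
            (Aᵀ * ρ - Bᵀ)ᵀ).trace - lam * (Bᵀ * B).trace)
      (((1 : Matrix (Fin n₂) (Fin n₂) ℝ) -
          lam • ((1 : Matrix (Fin n₂) (Fin n₂) ℝ) - ρᵀ * ρ))⁻¹ * ρᵀ * A) = 0 := by
  have hS : ((1 : Matrix (Fin n₂) (Fin n₂) ℝ) - ρᵀ * ρ)⁻¹.IsSymm :=
    IsSymm.inv (by rw [IsSymm, transpose_sub, transpose_one, transpose_mul, transpose_transpose])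
  set M : Matrix (Fin n₂) (Fin n₂) ℝ := 1 - ρᵀ * ρ
  have hf : (fun B : Matrix (Fin n₂) (Fin m) ℝ =>
        ((Aᵀ * ρ - Bᵀ) * M⁻¹ * (Aᵀ * ρ - Bᵀ)ᵀ).trace - lam * (Bᵀ * B).trace) =
      fun B => traceForm M⁻¹ (ρᵀ * A - B) (ρᵀ * A - B) - lam * traceForm 1 B B := by
    funext B
    simp only [traceForm_apply, transpose_sub, transpose_mul, transpose_transpose, Matrix.mul_one]
  rw [hf, Matrix.mul_assoc, (hasFDerivAt_traceForm_lagrangian hS _ _ lam).fderiv,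
    inv_mul_sub_add_smul_eq_zero hρ.det_pos.ne'.isUnit hinv, map_zero, smul_zero]

/-- Optimal secondary sensor configuration: the Fréchet derivative of the Lagrangian
`f(B̃) = Tr((Ãᵀρ − B̃ᵀ)(I − ρᵀρ)⁻¹(Ãᵀρ − B̃ᵀ)ᵀ) − λ Tr(B̃ᵀB̃)` vanishes at
`B̃* = (I − λ(I − ρᵀρ))⁻¹ ρᵀ Ã`. -/
theorem optimal_secondary_sensor_critical_point {n₁ n₂ m : ℕ}
    (A : Matrix (Fin n₁) (Fin m) ℝ) (ρ : Matrix (Fin n₁) (Fin n₂) ℝ)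
    (hρ : ((1 : Matrix (Fin n₂) (Fin n₂) ℝ) - ρᵀ * ρ).PosDef)
    (lam : ℝ) (hlam : 0 ≤ lam)
    (hinv : IsUnit ((1 : Matrix (Fin n₂) (Fin n₂) ℝ) -
      lam • ((1 : Matrix (Fin n₂) (Fin n₂) ℝ) - ρᵀ * ρ))) :
    fderiv ℝ
      (fun B : Matrix (Fin n₂) (Fin m) ℝ =>
        ((Aᵀ * ρ - Bᵀ) * ((1 : Matrix (Fin n₂) (Fin n₂) ℝ) - ρᵀ * ρ)⁻¹ *
            (Aᵀ * ρ - Bᵀ)ᵀ).trace - lam * (Bᵀ * B).trace)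
      (((1 : Matrix (Fin n₂) (Fin n₂) ℝ) -
          lam • ((1 : Matrix (Fin n₂) (Fin n₂) ℝ) - ρᵀ * ρ))⁻¹ * ρᵀ * A) = 0 :=
  optimal_secondary_sensor_critical_point_general A ρ hρ lam hinv
end

section
/- Let S₁, S₂ and P be real symmetric positive semidefinite m×m matrices. Then det(I + (S₁ + S₂)P) ≤ det(I + S₁P) · det(I + S₂P). Equivalently, in terms of the information function I_s(M) = log det(I + M P) of a Gaussian source with covariance P, I_s(S₁ + S₂) ≤ I_s(S₁) + I_s(S₂): the information obtained by jointly processing two sensor sets with uncorrelated Gaussian noises never exceeds the sum of the informations obtained from each set individually (nonnegativity of the multivariate mutual information between the source and the two sensor sets). -/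
/-!
Write `M = 1 + A` and `R = √B` for positive semidefinite `A`, `B`. Sylvester's identity
`det (1 + XY) = det (1 + YX)` gives `det (1 + A + B) = det M · det (1 + R M⁻¹ R)`. Since
`M ≥ 1` we have `M⁻¹ ≤ 1`, hence `R M⁻¹ R ≤ R R = B`, and the determinant is monotone in
the Loewner order on positive definite matrices, so
`det (1 + A + B) ≤ det (1 + A) · det (1 + B)`.
The theorem is the case `A = √P S₁ √P`, `B = √P S₂ √P`, again by Sylvester's identity.
-/

open Matrix

namespace Matrix

open scoped MatrixOrder

variable {n : Type*} [Fintype n] [DecidableEq n]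

theorem IsHermitian.det_one_add {A : Matrix n n ℝ} (hA : A.IsHermitian) :
    (1 + A).det = ∏ i, (1 + hA.eigenvalues i) := by
  conv_lhs =>
    rw [hA.spectral_theorem,
      ← map_one (Unitary.conjStarAlgAut ℝ (Matrix n n ℝ) hA.eigenvectorUnitary), ← map_add]
  simp [-Unitary.conjStarAlgAut_apply, ← diagonal_one, diagonal_add]

theorem PosSemidef.one_le_det_one_add {A : Matrix n n ℝ} (hA : A.PosSemidef) :
    1 ≤ (1 + A).det := by
  rw [hA.isHermitian.det_one_add]
  exact Finset.one_le_prod fun i _ ↦ le_add_of_nonneg_right (hA.eigenvalues_nonneg i)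

theorem PosSemidef.sqrt_mul_mul_sqrt {A : Matrix n n ℝ} (hA : A.PosSemidef) (B : Matrix n n ℝ) :
    (CFC.sqrt B * A * CFC.sqrt B).PosSemidef :=
  (conjugate_nonneg_of_nonneg hA.nonneg (CFC.sqrt_nonneg B)).posSemidef

theorem det_one_add_mul_eq_det_one_add_sqrt_mul_mul_sqrt (A : Matrix n n ℝ) {B : Matrix n n ℝ}
    (hB : B.PosSemidef) :
    (1 + A * B).det = (1 + CFC.sqrt B * A * CFC.sqrt B).det := by
  conv_lhs => rw [← CFC.sqrt_mul_sqrt_self B hB.nonneg]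
  rw [← mul_assoc, det_one_add_mul_comm, ← mul_assoc]

theorem PosDef.det_add_eq_det_mul_det_one_add {N D : Matrix n n ℝ} (hN : N.PosDef)
    (hD : D.PosSemidef) :
    (N + D).det = N.det * (1 + CFC.sqrt D * N⁻¹ * CFC.sqrt D).det := by
  have hfactor : N + D = N * (1 + N⁻¹ * D) := by
    rw [mul_add, mul_one, ← mul_assoc, mul_nonsing_inv _ hN.det_pos.ne'.isUnit, one_mul]
  rw [hfactor, det_mul, det_one_add_mul_eq_det_one_add_sqrt_mul_mul_sqrt _ hD]

theorem PosDef.det_le_det_of_le {N N' : Matrix n n ℝ} (hN : N.PosDef) (h : N ≤ N') :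
    N.det ≤ N'.det := by
  have hD : (N' - N).PosSemidef := h
  calc N.det = N.det * 1 := (mul_one _).symm
    _ ≤ N.det * (1 + CFC.sqrt (N' - N) * N⁻¹ * CFC.sqrt (N' - N)).det :=
        mul_le_mul_of_nonneg_left (hN.inv.posSemidef.sqrt_mul_mul_sqrt _).one_le_det_one_add
          hN.det_pos.le
    _ = N'.det := by rw [← hN.det_add_eq_det_mul_det_one_add hD, add_sub_cancel]

theorem PosSemidef.inv_one_add_le_one {A : Matrix n n ℝ} (hA : A.PosSemidef) :
    (1 + A)⁻¹ ≤ 1 := by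
  have hM : (1 + A).PosDef := PosDef.one.add_posSemidef hA
  have hunit : IsUnit (1 + A).det := hM.det_pos.ne'.isUnit
  have key : 1 - (1 + A)⁻¹ = (1 + A)⁻¹ * (A + Aᴴ * A) * ((1 + A)⁻¹)ᴴ := calc
    1 - (1 + A)⁻¹ = (1 + A)⁻¹ * ((1 + A) - 1) := by
      rw [mul_sub, nonsing_inv_mul _ hunit, mul_one]
    _ = (1 + A)⁻¹ * (A * (1 + A)) * (1 + A)⁻¹ := by
      rw [add_sub_cancel_left, mul_assoc, mul_assoc, mul_nonsing_inv _ hunit, mul_one]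
    _ = (1 + A)⁻¹ * (A + Aᴴ * A) * ((1 + A)⁻¹)ᴴ := by
      rw [hA.isHermitian.eq, hM.isHermitian.inv.eq, mul_one_add]
  rw [le_iff, key]
  exact (hA.add (posSemidef_conjTranspose_mul_self A)).mul_mul_conjTranspose_same _

theorem PosSemidef.det_one_add_add_le {A B : Matrix n n ℝ} (hA : A.PosSemidef)
    (hB : B.PosSemidef) :
    (1 + (A + B)).det ≤ (1 + A).det * (1 + B).det := by
  set R := CFC.sqrt B
  have hM : (1 + A).PosDef := PosDef.one.add_posSemidef hA
  have hconj : R * (1 + A)⁻¹ * R ≤ B := calc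
    R * (1 + A)⁻¹ * R ≤ R * 1 * R :=
      (IsSelfAdjoint.of_nonneg (CFC.sqrt_nonneg B)).conjugate_le_conjugate hA.inv_one_add_le_one
    _ = B := by rw [mul_one, CFC.sqrt_mul_sqrt_self B hB.nonneg]
  rw [← add_assoc, hM.det_add_eq_det_mul_det_one_add hB]
  exact mul_le_mul_of_nonneg_left
    ((PosDef.one.add_posSemidef (hM.inv.posSemidef.sqrt_mul_mul_sqrt B)).det_le_det_of_le
      (add_le_add_right hconj 1)) hM.det_pos.le

end Matrix

/-- Subadditivity of the Gaussian information function: for positive semidefinite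
`S₁, S₂, P`, `det(I + (S₁ + S₂)P) ≤ det(I + S₁P) · det(I + S₂P)`, i.e.
`I_s(S₁ + S₂) ≤ I_s(S₁) + I_s(S₂)` for `I_s(M) = log det(I + M P)`: nonnegativity of the
multivariate mutual information between the source and two sensor sets with uncorrelated
Gaussian noises. -/
theorem information_function_subadditive {m : ℕ}
    (S₁ S₂ P : Matrix (Fin m) (Fin m) ℝ)
    (h₁ : S₁.PosSemidef) (h₂ : S₂.PosSemidef) (hP : P.PosSemidef) :
    ((1 : Matrix (Fin m) (Fin m) ℝ) + (S₁ + S₂) * P).det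
      ≤ ((1 : Matrix (Fin m) (Fin m) ℝ) + S₁ * P).det *
        ((1 : Matrix (Fin m) (Fin m) ℝ) + S₂ * P).det := by
  simp only [det_one_add_mul_eq_det_one_add_sqrt_mul_mul_sqrt _ hP]
  rw [mul_add, add_mul]
  exact (h₁.sqrt_mul_mul_sqrt P).det_one_add_add_le (h₂.sqrt_mul_mul_sqrt P)
end
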